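/- arXiv:2308.11191 — 2 statements merged into one kernel-verified Lean document; each statement's English description precedes it below -/
import Mathlib

section
/- Let p be a prime number and O a complete discrete valuation ring whose maximal ideal is generated by p, and let c ≥ 2 be an integer not divisible by p (so the image of c in O is a unit). Let A := O⟦μ⟧ and let γ : A → A be the O-algebra homomorphism, continuous for the μ-adic topology, determined by γ(μ) = (1+μ)^c − 1. Then γ(μ) = μ·u for a unit u of A, so γ extends uniquely to a ring endomorphism of A[1/μ]. Let N and N' be finite free A-modules, equipped with γ-semilinear additive endomorphisms σ_N and σ_{N'} respectively (σ(a·x) = γ(a)·σ(x)) such that σ_N(x) − x ∈ μN for every x ∈ N and σ_{N'}(y) − y ∈ μN' for every y ∈ N' (the actions are trivial modulo μ); extend σ_N and σ_{N'} to γ-semilinear endomorphisms of N[1/μ] and N'[1/μ] by σ(x/μ^k) := σ(x)/γ(μ)^k. If f : N[1/μ] → N'[1/μ] is an A[1/μ]-linear map satisfying f ∘ σ_N = σ_{N'} ∘ f, then f(N) ⊆ N'. -/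
/-!
Put `F x = f (x / 1)`. As `N` is finitely generated, `μ ^ m • F(N) ⊆ N'` for some `m`, and it
suffices to lower `m` while it is positive. If `μ ^ (m + 1) • F x = y ∈ N'`, then equivariance gives
`μ ^ (m + 1) • F (σ x) = u⁻¹ ^ (m + 1) • σ' y`, because `γ(μ) ^ (m + 1) = μ ^ (m + 1) u ^ (m + 1)`.
Since `σ` and `σ'` are trivial modulo `μ`, this says `(u⁻¹ ^ (m + 1) - 1) • y ∈ μ N'`. The constant
term `c⁻¹ ^ (m + 1) - 1` of `u⁻¹ ^ (m + 1) - 1` is nonzero, as `u(0) = c ≥ 2` and `O` has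
characteristic zero (`p` is a nonzero nonunit of `O`); since `μ` is prime and `N'` is free, this
forces `y ∈ μ N'`, i.e. `μ ^ m • F x ∈ N'`.
-/

open PowerSeries

theorem Module.Free.exists_eq_smul_of_smul_eq_smul {R M : Type*} [CommRing R] [AddCommGroup M]
    [Module R M] [Module.Free R M] {π q : R} (hπ : Prime π) (hq : ¬ π ∣ q) {y z : M}
    (h : q • y = π • z) : ∃ y', y = π • y' := by
  classical
  obtain ⟨ι, b⟩ := Module.Free.exists_basis (R := R) (M := M)
  have hdvd : ∀ i, π ∣ b.repr y i := fun i =>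
    (hπ.dvd_or_dvd ⟨b.repr z i, by simpa using congr(b.repr $h i)⟩).resolve_left hq
  choose r hr using hdvd
  refine ⟨∑ i ∈ (b.repr y).support, r i • b i, ?_⟩
  conv_lhs => rw [← b.linearCombination_repr y, Finsupp.linearCombination_apply, Finsupp.sum]
  simp only [Finset.smul_sum, smul_smul, ← hr]

theorem charZero_of_prime_of_not_isUnit {R : Type*} [CommRing R] [IsDomain R] {p : ℕ}
    (hp : p.Prime) (hp0 : (p : R) ≠ 0) (hpu : ¬ IsUnit (p : R)) : CharZero R := by
  obtain hq | hq := CharP.char_is_prime_or_zero R (ringChar R)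
  · exfalso
    obtain rfl | hne := eq_or_ne (ringChar R) p
    · exact hp0 (ringChar.Nat.cast_ringChar)
    · have hcop : p.Coprime (ringChar R) := (Nat.coprime_primes hp hq).2 hne.symm
      apply hpu
      simpa using (ZMod.unitOfCoprime p hcop).isUnit.map (ZMod.castHom dvd_rfl R)
  · exact charZero_of_inj_zero fun n hn => by simpa [hq] using (ringChar.spec R n).1 hn

theorem PowerSeries.coeff_one_add_X_pow (R : Type*) [CommSemiring R] (n k : ℕ) :
    coeff k ((1 + X : PowerSeries R) ^ n) = n.choose k := by
  rw [show (1 + X : PowerSeries R) ^ n = ((1 + Polynomial.X) ^ n : Polynomial R) by simp,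
    Polynomial.coeff_coe, Polynomial.coeff_one_add_X_pow]

theorem PowerSeries.not_X_dvd_inv_pow_sub_one {O : Type*} [CommRing O] [CharZero O]
    (u : (PowerSeries O)ˣ) {c : ℕ} (hc : 1 < c) (hu : constantCoeff (u : PowerSeries O) = c)
    (k : ℕ) : ¬ X ∣ ((u⁻¹ : (PowerSeries O)ˣ) : PowerSeries O) ^ (k + 1) - 1 := by
  have hce : (c : O) * constantCoeff ((u⁻¹ : (PowerSeries O)ˣ) : PowerSeries O) = 1 := by
    rw [← hu, ← map_mul, Units.mul_inv, map_one]
  rw [X_dvd_iff, map_sub, map_pow, map_one, sub_eq_zero]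
  intro he
  have hc1 : ((c ^ (k + 1) : ℕ) : O) = 1 := by
    calc ((c ^ (k + 1) : ℕ) : O)
        = ((c : O) * constantCoeff ((u⁻¹ : (PowerSeries O)ˣ) : PowerSeries O)) ^ (k + 1) := by
          rw [mul_pow, he, mul_one, Nat.cast_pow]
      _ = 1 := by rw [hce, one_pow]
  exact (Nat.one_lt_pow k.succ_ne_zero hc).ne' (Nat.cast_eq_one.1 hc1)

namespace LocalizedModule

variable {R M N : Type*} [CommRing R] [AddCommGroup M] [Module R M] [AddCommGroup N] [Module R N]

theorem smul_eq_mk_one_iff {S : Submonoid R} (s : S) (z : LocalizedModule S M) (y : M) :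
    (s : R) • z = mk y 1 ↔ z = mk y s := by
  rw [← mk_cancel s y, Submonoid.smul_def, ← smul'_mk, ← Submonoid.smul_def, ← Submonoid.smul_def]
  exact IsLocalizedModule.smul_inj (mkLinearMap S M) s _ _

theorem mk_one_injective [Module.IsTorsionFree R M] {S : Submonoid R} (hS : S ≤ nonZeroDivisors R) :
    Function.Injective fun y : M => mk y (1 : S) :=
  (IsLocalizedModule.injective_iff_isRegular S (mkLinearMap S M)).2 fun c =>
    (isRegular_iff_mem_nonZeroDivisors.2 (hS c.2)).isSMulRegular

theorem exists_pow_smul_eq_mk_one [Module.Finite R M] (π : R)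
    (F : M →ₗ[R] LocalizedModule (Submonoid.powers π) N) :
    ∃ m : ℕ, ∀ x, ∃ y, π ^ m • F x = mk y 1 := by
  obtain ⟨s, hs⟩ := Module.Finite.fg_top (R := R) (M := M)
  obtain ⟨⟨_, m, rfl⟩, hm⟩ := IsLocalizedModule.exist_integer_multiples (Submonoid.powers π)
    (mkLinearMap (Submonoid.powers π) N) s F
  refine ⟨m, fun x => ?_⟩
  obtain ⟨y, hy⟩ : x ∈ (LinearMap.range (mkLinearMap _ N)).comap (π ^ m • F) :=
    Submodule.span_le.2 (fun a ha => hm a ha) (hs ▸ Submodule.mem_top)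
  exact ⟨y, hy.symm⟩

end LocalizedModule

section Descent

open LocalizedModule

variable {R N N' : Type*} [CommRing R] [IsDomain R] [AddCommGroup N] [Module R N]
  [AddCommGroup N'] [Module R N'] [Module.Free R N'] {π : R}

theorem exists_pow_smul_eq_mk_one_of_succ (hπ : Prime π)
    (F : N →ₗ[R] LocalizedModule (Submonoid.powers π) N') (σ : N → N) (σ' : N' → N') (v : R)
    (hσ : ∀ x, ∃ z, σ x - x = π • z) (hσ' : ∀ y, ∃ t, σ' y - y = π • t) (m : ℕ)
    (hv : ¬ π ∣ v ^ (m + 1) - 1)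
    (hF : ∀ x y, π ^ (m + 1) • F x = mk y 1 → π ^ (m + 1) • F (σ x) = mk (v ^ (m + 1) • σ' y) 1)
    (hm : ∀ x, ∃ y, π ^ (m + 1) • F x = mk y 1) (x : N) :
    ∃ y, π ^ m • F x = mk y 1 := by
  obtain ⟨y, hy⟩ := hm x
  obtain ⟨z, hz⟩ := hσ x
  obtain ⟨w, hw⟩ := hm z
  obtain ⟨t, ht⟩ := hσ' y
  have hσx : π ^ (m + 1) • F (σ x) = mk (y + π • w) 1 := by
    rw [← sub_add_cancel (σ x) x, hz, map_add, map_smul, smul_add, smul_comm, hw, hy,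
      smul'_mk, mk_add_mk, one_smul, one_smul, mul_one, add_comm]
  have hσy : v ^ (m + 1) • σ' y = y + π • w :=
    mk_one_injective (powers_le_nonZeroDivisors_of_noZeroDivisors hπ.ne_zero)
      ((hF x y hy).symm.trans hσx)
  obtain ⟨y', rfl⟩ : ∃ y', y = π • y' := by
    refine Module.Free.exists_eq_smul_of_smul_eq_smul hπ hv (z := w - v ^ (m + 1) • t) ?_
    rw [← sub_add_cancel (σ' y) y, ht, smul_add, smul_comm, add_comm] at hσy
    rw [sub_smul, one_smul, smul_sub, sub_eq_sub_iff_add_eq_add, hσy, add_comm]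
  refine ⟨y', (IsLocalizedModule.smul_inj (mkLinearMap _ N') ⟨π, Submonoid.mem_powers π⟩ _ _).1 ?_⟩
  change π • (π ^ m • F x) = π • mk y' 1
  rw [smul_smul, ← pow_succ', hy, smul'_mk]

theorem exists_eq_mk_one_of_pow_smul (hπ : Prime π)
    (F : N →ₗ[R] LocalizedModule (Submonoid.powers π) N') (σ : N → N) (σ' : N' → N') (v : R)
    (hσ : ∀ x, ∃ z, σ x - x = π • z) (hσ' : ∀ y, ∃ t, σ' y - y = π • t)
    (hv : ∀ k, ¬ π ∣ v ^ (k + 1) - 1)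
    (hF : ∀ k x y, π ^ k • F x = mk y 1 → π ^ k • F (σ x) = mk (v ^ k • σ' y) 1) :
    ∀ m, (∀ x, ∃ y, π ^ m • F x = mk y 1) → ∀ x, ∃ y, F x = mk y 1
  | 0, hm => by simpa using hm
  | m + 1, hm => exists_eq_mk_one_of_pow_smul hπ F σ σ' v hσ hσ' hv hF m
      (exists_pow_smul_eq_mk_one_of_succ hπ F σ σ' v hσ hσ' m (hv m) (hF (m + 1)) hm)

end Descent

open PowerSeries in
theorem statement1_general
    (p : ℕ) (hp : p.Prime)
    (O : Type*) [CommRing O] [IsDomain O] [IsDiscreteValuationRing O]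
    (hmax : Ideal.span {(p : O)} = IsLocalRing.maximalIdeal O)
    (c : ℕ) (hc2 : 2 ≤ c)
    -- the `O`-algebra endomorphism `γ` of `A = O⟦μ⟧`, determined by
    -- `γ(μ) = (1+μ)^c - 1` and continuity for the `μ`-adic topology
    (γ : PowerSeries O →+* PowerSeries O)
    (hγ : ∀ (f : PowerSeries O) (k : ℕ), (coeff k) (γ f) =
      ∑ n ∈ Finset.range (k + 1),
        (coeff n) f * (coeff k) (((1 + X : PowerSeries O) ^ c - 1) ^ n))
    -- `γ(μ) = μ · u` for a unit `u`
    (u : (PowerSeries O)ˣ) (hu : γ X = X * (u : PowerSeries O))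
    -- finite free modules with `γ`-semilinear endomorphisms, trivial mod `μ`
    (N : Type*) [AddCommGroup N] [Module (PowerSeries O) N]
    [Module.Finite (PowerSeries O) N]
    (N' : Type*) [AddCommGroup N'] [Module (PowerSeries O) N']
    [Module.Free (PowerSeries O) N']
    (σN : N →ₛₗ[γ] N) (σN' : N' →ₛₗ[γ] N')
    (htrivN : ∀ x : N, ∃ y : N, σN x - x = (X : PowerSeries O) • y)
    (htrivN' : ∀ x : N', ∃ y : N', σN' x - x = (X : PowerSeries O) • y)
    -- the extensions of `σN`, `σN'` to `N[1/μ]`, `N'[1/μ]`,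
    -- with `σ(x/μ^m) = σ(x)/γ(μ)^m = u^{-m}·σ(x)/μ^m`
    (σLN : LocalizedModule (Submonoid.powers (X : PowerSeries O)) N →
      LocalizedModule (Submonoid.powers (X : PowerSeries O)) N)
    (hσLN : ∀ (x : N) (m : ℕ),
      σLN (LocalizedModule.mk x
          ((⟨X, Submonoid.mem_powers _⟩ : Submonoid.powers (X : PowerSeries O)) ^ m)) =
        LocalizedModule.mk ((((u⁻¹ : (PowerSeries O)ˣ) : PowerSeries O) ^ m) • σN x)
          ((⟨X, Submonoid.mem_powers _⟩ : Submonoid.powers (X : PowerSeries O)) ^ m))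
    (σLN' : LocalizedModule (Submonoid.powers (X : PowerSeries O)) N' →
      LocalizedModule (Submonoid.powers (X : PowerSeries O)) N')
    (hσLN' : ∀ (x : N') (m : ℕ),
      σLN' (LocalizedModule.mk x
          ((⟨X, Submonoid.mem_powers _⟩ : Submonoid.powers (X : PowerSeries O)) ^ m)) =
        LocalizedModule.mk ((((u⁻¹ : (PowerSeries O)ˣ) : PowerSeries O) ^ m) • σN' x)
          ((⟨X, Submonoid.mem_powers _⟩ : Submonoid.powers (X : PowerSeries O)) ^ m))
    -- an `A[1/μ]`-linear map commuting with the semilinear endomorphisms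
    (f : LocalizedModule (Submonoid.powers (X : PowerSeries O)) N
      →ₗ[Localization (Submonoid.powers (X : PowerSeries O))]
        LocalizedModule (Submonoid.powers (X : PowerSeries O)) N')
    (hcomm : ∀ z, f (σLN z) = σLN' (f z)) :
    ∀ x : N, ∃ y : N',
      f (LocalizedModule.mk x 1) = LocalizedModule.mk y 1 := by
  have hp0 : (p : O) ≠ 0 := fun h =>
    IsDiscreteValuationRing.not_a_field O (hmax ▸ Ideal.span_singleton_eq_bot.2 h)
  have hpu : ¬ IsUnit (p : O) :=
    (IsLocalRing.mem_maximalIdeal _).1 (hmax ▸ Ideal.mem_span_singleton_self _)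
  have : CharZero O := charZero_of_prime_of_not_isUnit hp hp0 hpu
  have hu0 : constantCoeff (u : PowerSeries O) = c := by
    simpa [hu, coeff_X, coeff_one_add_X_pow] using hγ X 1
  let F := (f.restrictScalars (PowerSeries O)).comp
    (LocalizedModule.mkLinearMap (Submonoid.powers (X : PowerSeries O)) N)
  have hF : ∀ (k : ℕ) (x : N) (y : N'), (X : PowerSeries O) ^ k • F x = LocalizedModule.mk y 1 →
      (X : PowerSeries O) ^ k • F (σN x) =
        LocalizedModule.mk ((((u⁻¹ : (PowerSeries O)ˣ) : PowerSeries O) ^ k) • σN' y) 1 := by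
    intro k x y h
    let s : Submonoid.powers (X : PowerSeries O) := ⟨X, Submonoid.mem_powers _⟩ ^ k
    have hσx : LocalizedModule.mk (σN x) 1 = σLN (LocalizedModule.mk x 1) := by
      simpa using (hσLN x 0).symm
    refine (LocalizedModule.smul_eq_mk_one_iff s _ _).2 ?_
    change f (LocalizedModule.mk (σN x) 1) = _
    rw [hσx, hcomm]
    change σLN' (F x) = _
    rw [(LocalizedModule.smul_eq_mk_one_iff s _ _).1 h, hσLN']
  obtain ⟨m, hm⟩ := LocalizedModule.exists_pow_smul_eq_mk_one X F
  exact exists_eq_mk_one_of_pow_smul X_prime F σN σN' _ htrivN htrivN'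
    (not_X_dvd_inv_pow_sub_one u hc2 hu0) hF m hm

open PowerSeries in
theorem statement1
    (p : ℕ) (hp : p.Prime)
    (O : Type*) [CommRing O] [IsDomain O] [IsDiscreteValuationRing O]
    [IsAdicComplete (Ideal.span {(p : O)}) O]
    (hmax : Ideal.span {(p : O)} = IsLocalRing.maximalIdeal O)
    (c : ℕ) (hc2 : 2 ≤ c) (hpc : ¬ p ∣ c)
    -- the `O`-algebra endomorphism `γ` of `A = O⟦μ⟧`, determined by
    -- `γ(μ) = (1+μ)^c - 1` and continuity for the `μ`-adic topology
    (γ : PowerSeries O →+* PowerSeries O)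
    (hγ : ∀ (f : PowerSeries O) (k : ℕ), (coeff k) (γ f) =
      ∑ n ∈ Finset.range (k + 1),
        (coeff n) f * (coeff k) (((1 + X : PowerSeries O) ^ c - 1) ^ n))
    -- `γ(μ) = μ · u` for a unit `u`
    (u : (PowerSeries O)ˣ) (hu : γ X = X * (u : PowerSeries O))
    -- finite free modules with `γ`-semilinear endomorphisms, trivial mod `μ`
    (N : Type*) [AddCommGroup N] [Module (PowerSeries O) N]
    [Module.Finite (PowerSeries O) N] [Module.Free (PowerSeries O) N]
    (N' : Type*) [AddCommGroup N'] [Module (PowerSeries O) N']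
    [Module.Finite (PowerSeries O) N'] [Module.Free (PowerSeries O) N']
    (σN : N →ₛₗ[γ] N) (σN' : N' →ₛₗ[γ] N')
    (htrivN : ∀ x : N, ∃ y : N, σN x - x = (X : PowerSeries O) • y)
    (htrivN' : ∀ x : N', ∃ y : N', σN' x - x = (X : PowerSeries O) • y)
    -- the extensions of `σN`, `σN'` to `N[1/μ]`, `N'[1/μ]`,
    -- with `σ(x/μ^m) = σ(x)/γ(μ)^m = u^{-m}·σ(x)/μ^m`
    (σLN : LocalizedModule (Submonoid.powers (X : PowerSeries O)) N →
      LocalizedModule (Submonoid.powers (X : PowerSeries O)) N)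
    (hσLN : ∀ (x : N) (m : ℕ),
      σLN (LocalizedModule.mk x
          ((⟨X, Submonoid.mem_powers _⟩ : Submonoid.powers (X : PowerSeries O)) ^ m)) =
        LocalizedModule.mk ((((u⁻¹ : (PowerSeries O)ˣ) : PowerSeries O) ^ m) • σN x)
          ((⟨X, Submonoid.mem_powers _⟩ : Submonoid.powers (X : PowerSeries O)) ^ m))
    (σLN' : LocalizedModule (Submonoid.powers (X : PowerSeries O)) N' →
      LocalizedModule (Submonoid.powers (X : PowerSeries O)) N')
    (hσLN' : ∀ (x : N') (m : ℕ),
      σLN' (LocalizedModule.mk x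
          ((⟨X, Submonoid.mem_powers _⟩ : Submonoid.powers (X : PowerSeries O)) ^ m)) =
        LocalizedModule.mk ((((u⁻¹ : (PowerSeries O)ˣ) : PowerSeries O) ^ m) • σN' x)
          ((⟨X, Submonoid.mem_powers _⟩ : Submonoid.powers (X : PowerSeries O)) ^ m))
    -- an `A[1/μ]`-linear map commuting with the semilinear endomorphisms
    (f : LocalizedModule (Submonoid.powers (X : PowerSeries O)) N
      →ₗ[Localization (Submonoid.powers (X : PowerSeries O))]
        LocalizedModule (Submonoid.powers (X : PowerSeries O)) N')
    (hcomm : ∀ z, f (σLN z) = σLN' (f z)) :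
    ∀ x : N, ∃ y : N',
      f (LocalizedModule.mk x 1) = LocalizedModule.mk y 1 :=
  statement1_general p hp O hmax c hc2 γ hγ u hu N N' σN σN' htrivN htrivN' σLN hσLN σLN' hσLN' f
    hcomm
end

section
/- Let p be a prime number and K a field of characteristic 0, complete with respect to a nonarchimedean absolute value |·| induced by a discrete valuation in which p is a uniformizer, with valuation ring O_K = {x ∈ K : |x| ≤ 1}. Let B_K^+ denote the subring of K⟦X⟧ consisting of power series with bounded coefficients, i.e. B_K^+ = ⋃_{m≥0} p^{−m}·O_K⟦X⟧ = O_K⟦X⟧[1/p]. Then B_K^+ is contained in B_rig,K^+, and the inclusion ring homomorphism B_K^+ → B_rig,K^+ is faithfully flat. -/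
/-!
After multiplication by a bounded series, every nonzero `f ∈ B⁺_K` takes the form `X ^ n + A`
with all coefficients of `A` of norm at most `|p|`, where `n` is the Weierstrass degree of `f`.
Division with remainder by such series makes `B⁺_K` a principal ideal domain, over which the
torsion-free module `B⁺_rig,K` is flat. Faithful flatness then amounts to: a bounded `f` that is
invertible in `B⁺_rig,K` is invertible in `B⁺_K`. If `(X ^ n + A) * g` is bounded by `C` and `g`
converges on the open unit disk, then `|g_j| ρ ^ (j + n) ≤ C` whenever `|p| < ρ ^ n < 1`, and
letting `ρ → 1` shows that `g` is bounded.
-/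

open PowerSeries Filter Finset

/-- The ring of power series converging on the open unit disk over `K`: those
`f = Σ aₖ Xᵏ` with `‖aₖ‖ * ρᵏ → 0` for every `0 ≤ ρ < 1`. -/
noncomputable def BRig (K : Type*) [NormedField K] : Subring (PowerSeries K) where
  carrier := {f | ∀ ρ : ℝ, 0 ≤ ρ → ρ < 1 →
    Tendsto (fun k : ℕ => ‖(PowerSeries.coeff k) f‖ * ρ ^ k) atTop (nhds 0)}
  zero_mem' := by
    intro ρ _ _
    simp
  one_mem' := by
    intro ρ _ _
    refine tendsto_const_nhds.congr' ?_
    filter_upwards [eventually_ge_atTop 1] with k hk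
    have : (PowerSeries.coeff k) (1 : PowerSeries K) = 0 := by
      simp [PowerSeries.coeff_one, Nat.one_le_iff_ne_zero.mp hk]
    rw [this]; simp
  add_mem' := by
    intro f g hf hg ρ h0 h1
    have hlim : Tendsto (fun k : ℕ => ‖(PowerSeries.coeff k) f‖ * ρ ^ k
        + ‖(PowerSeries.coeff k) g‖ * ρ ^ k) atTop (nhds 0) := by
      simpa using (hf ρ h0 h1).add (hg ρ h0 h1)
    refine squeeze_zero (fun k => by positivity) (fun k => ?_) hlim
    have hb : ‖(PowerSeries.coeff k) (f + g)‖
        ≤ ‖(PowerSeries.coeff k) f‖ + ‖(PowerSeries.coeff k) g‖ := by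
      simp only [map_add]; exact norm_add_le _ _
    calc ‖(PowerSeries.coeff k) (f + g)‖ * ρ ^ k
        ≤ (‖(PowerSeries.coeff k) f‖ + ‖(PowerSeries.coeff k) g‖) * ρ ^ k :=
          mul_le_mul_of_nonneg_right hb (by positivity)
      _ = ‖(PowerSeries.coeff k) f‖ * ρ ^ k + ‖(PowerSeries.coeff k) g‖ * ρ ^ k := by ring
  neg_mem' := by
    intro f hf ρ h0 h1
    simpa using hf ρ h0 h1
  mul_mem' := by
    intro f g hf hg ρ h0 h1
    obtain ⟨ρ', hρ'0, hρ'1, hρρ'⟩ : ∃ ρ' : ℝ, 0 < ρ' ∧ ρ' < 1 ∧ ρ < ρ' :=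
      ⟨(ρ + 1) / 2, by linarith, by linarith, by linarith⟩
    obtain ⟨Ca, hCa⟩ := (hf ρ' hρ'0.le hρ'1).bddAbove_range
    obtain ⟨Cb, hCb⟩ := (hg ρ' hρ'0.le hρ'1).bddAbove_range
    obtain ⟨Cf, hCf0, hfb⟩ : ∃ C : ℝ, 0 < C ∧ ∀ k : ℕ, ‖(PowerSeries.coeff k) f‖ ≤ C / ρ' ^ k := by
      refine ⟨max Ca 1, lt_of_lt_of_le one_pos (le_max_right _ _), fun k => ?_⟩
      rw [le_div_iff₀ (by positivity)]
      exact le_trans (hCa (Set.mem_range_self k)) (le_max_left _ _)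
    obtain ⟨Cg, hCg0, hgb⟩ : ∃ C : ℝ, 0 < C ∧ ∀ k : ℕ, ‖(PowerSeries.coeff k) g‖ ≤ C / ρ' ^ k := by
      refine ⟨max Cb 1, lt_of_lt_of_le one_pos (le_max_right _ _), fun k => ?_⟩
      rw [le_div_iff₀ (by positivity)]
      exact le_trans (hCb (Set.mem_range_self k)) (le_max_left _ _)
    have hr0 : 0 ≤ ρ / ρ' := by positivity
    have hr1 : ρ / ρ' < 1 := (div_lt_one hρ'0).mpr hρρ'
    have hlim : Tendsto (fun n : ℕ => Cf * Cg * (((n:ℝ) + 1) * (ρ / ρ') ^ n)) atTop (nhds 0) := by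
      have h1' : Tendsto (fun n : ℕ => (n:ℝ) * (ρ / ρ') ^ n) atTop (nhds 0) := by
        have := (summable_pow_mul_geometric_of_norm_lt_one 1
          (r := ρ / ρ') (by rwa [Real.norm_eq_abs, abs_of_nonneg hr0])).tendsto_atTop_zero
        simpa using this
      have h2' : Tendsto (fun n : ℕ => (ρ / ρ') ^ n) atTop (nhds 0) :=
        tendsto_pow_atTop_nhds_zero_of_lt_one hr0 hr1
      have := (h1'.add h2').const_mul (Cf * Cg)
      simpa [add_mul, mul_add] using this
    refine squeeze_zero (fun k => by positivity) (fun n => ?_) hlim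
    have hstep : ‖(PowerSeries.coeff n) (f * g)‖ ≤ ((n:ℝ) + 1) * (Cf * Cg / ρ' ^ n) := by
      rw [PowerSeries.coeff_mul]
      calc ‖∑ p ∈ antidiagonal n, (PowerSeries.coeff p.1) f * (PowerSeries.coeff p.2) g‖
          ≤ ∑ p ∈ antidiagonal n, ‖(PowerSeries.coeff p.1) f * (PowerSeries.coeff p.2) g‖ :=
            norm_sum_le _ _
        _ ≤ ∑ _p ∈ antidiagonal n, Cf * Cg / ρ' ^ n := by
            refine Finset.sum_le_sum fun p hp => ?_
            replace hp : p.1 + p.2 = n := by simpa using hp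
            calc ‖(PowerSeries.coeff p.1) f * (PowerSeries.coeff p.2) g‖
                = ‖(PowerSeries.coeff p.1) f‖ * ‖(PowerSeries.coeff p.2) g‖ := norm_mul _ _
              _ ≤ Cf / ρ' ^ p.1 * (Cg / ρ' ^ p.2) :=
                  mul_le_mul (hfb p.1) (hgb p.2) (norm_nonneg _) (by positivity)
              _ = Cf * Cg / ρ' ^ n := by
                  rw [div_mul_div_comm, ← pow_add, hp]
        _ = ((n:ℝ) + 1) * (Cf * Cg / ρ' ^ n) := by
            rw [Finset.sum_const, Finset.Nat.card_antidiagonal]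

            ring
    have hρ'ne : ρ' ^ n ≠ 0 := by positivity
    calc ‖(PowerSeries.coeff n) (f * g)‖ * ρ ^ n
        ≤ ((n:ℝ) + 1) * (Cf * Cg / ρ' ^ n) * ρ ^ n := by gcongr
      _ = Cf * Cg * (((n:ℝ) + 1) * (ρ / ρ') ^ n) := by
          rw [div_pow]
          field_simp

/-- In a nonarchimedean normed field, a finite sum of elements of norm at most `B ≥ 0`
has norm at most `B`. -/
lemma nonarch_finset_sum_le {K : Type*} [NormedField K]
    (hna : IsNonarchimedean (fun x : K => ‖x‖)) {ι : Type*} (s : Finset ι) (g : ι → K)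
    {B : ℝ} (hB : 0 ≤ B) (h : ∀ i ∈ s, ‖g i‖ ≤ B) : ‖∑ i ∈ s, g i‖ ≤ B := by
  classical
  revert h
  induction s using Finset.induction_on with
  | empty => intro _; simpa using hB
  | @insert a s ha ih =>
      intro h
      rw [Finset.sum_insert ha]
      exact le_trans (hna _ _) (max_le (h a (Finset.mem_insert_self a s))
        (ih fun i hi => h i (Finset.mem_insert_of_mem hi)))

/-- The ring `B⁺_K = ⋃ₘ p^{-m}·O_K⟦X⟧ = O_K⟦X⟧[1/p]` of power series over `K` with
bounded coefficients (this is a subring since the norm is nonarchimedean). -/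
noncomputable def Bplus (K : Type*) [NormedField K]
    (hna : IsNonarchimedean (fun x : K => ‖x‖)) : Subring (PowerSeries K) where
  carrier := {f | ∃ C : ℝ, ∀ k : ℕ, ‖(PowerSeries.coeff k) f‖ ≤ C}
  zero_mem' := ⟨0, fun k => by simp⟩
  one_mem' := ⟨1, fun k => by
    rcases eq_or_ne k 0 with h | h <;> simp [PowerSeries.coeff_one, h]⟩
  add_mem' := by
    rintro f g ⟨Cf, hf⟩ ⟨Cg, hg⟩
    exact ⟨Cf + Cg, fun k => by
      simpa only [map_add] using le_trans (norm_add_le _ _) (add_le_add (hf k) (hg k))⟩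
  neg_mem' := by
    rintro f ⟨C, hf⟩
    exact ⟨C, fun k => by simpa using hf k⟩
  mul_mem' := by
    rintro f g ⟨Cf, hf⟩ ⟨Cg, hg⟩
    refine ⟨(Cf ⊔ 0) * (Cg ⊔ 0), fun k => ?_⟩
    rw [PowerSeries.coeff_mul]
    refine nonarch_finset_sum_le hna _ _ (by positivity) fun q hq => ?_
    rw [norm_mul]
    exact mul_le_mul (le_trans (hf q.1) (le_max_left _ _))
      (le_trans (hg q.2) (le_max_left _ _)) (norm_nonneg _)
      (le_trans (norm_nonneg _) (le_trans (hf 0) (le_max_left _ _)))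

/-- Power series with bounded coefficients converge on the open unit disk. -/
lemma Bplus_le_BRig (K : Type*) [NormedField K]
    (hna : IsNonarchimedean (fun x : K => ‖x‖)) : Bplus K hna ≤ BRig K := by
  rintro f ⟨C, hC⟩ ρ h0 h1
  have hlim : Tendsto (fun k : ℕ => (C ⊔ 0) * ρ ^ k) atTop (nhds 0) := by
    simpa using (tendsto_pow_atTop_nhds_zero_of_lt_one h0 h1).const_mul (C ⊔ 0)
  refine squeeze_zero (fun k => by positivity) (fun k => ?_) hlim
  exact mul_le_mul_of_nonneg_right (le_trans (hC k) (le_max_left _ _)) (by positivity)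

theorem norm_le_of_norm_lt_one {K : Type*} [NormedField K] {θ : ℝ} (hθ0 : 0 < θ) (hθ1 : θ < 1)
    (hdisc : ∀ x : K, x ≠ 0 → ∃ n : ℤ, ‖x‖ = θ ^ n) {x : K} (hx : ‖x‖ < 1) : ‖x‖ ≤ θ := by
  rcases eq_or_ne x 0 with rfl | hx0
  · simpa using hθ0.le
  obtain ⟨m, hm⟩ := hdisc x hx0
  rw [hm, zpow_lt_one_iff_right_of_lt_one₀ hθ0 hθ1] at hx
  rw [hm]
  simpa using zpow_le_zpow_right_of_le_one₀ hθ0 hθ1.le (by omega : (1 : ℤ) ≤ m)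

namespace PowerSeries

variable {K : Type*} [NormedField K] {θ : ℝ}

theorem norm_coeff_mul_le [IsUltrametricDist K] {f g : K⟦X⟧} {C D : ℝ} (hC : 0 ≤ C)
    (hf : ∀ k, ‖coeff k f‖ ≤ C) (hg : ∀ k, ‖coeff k g‖ ≤ D) (k : ℕ) :
    ‖coeff k (f * g)‖ ≤ C * D := by
  have hD : 0 ≤ D := (norm_nonneg _).trans (hg 0)
  rw [coeff_mul]
  refine IsUltrametricDist.norm_sum_le_of_forall_le_of_nonneg (by positivity) fun q _ => ?_
  rw [norm_mul]
  exact mul_le_mul (hf q.1) (hg q.2) (norm_nonneg _) hC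

theorem norm_coeff_inv_le_one [IsUltrametricDist K] {B : K⟦X⟧} (hB0 : constantCoeff B = 1)
    (hB : ∀ k, ‖coeff k B‖ ≤ 1) (k : ℕ) : ‖coeff k B⁻¹‖ ≤ 1 := by
  induction k using Nat.strong_induction_on with
  | _ k ih =>
    rw [coeff_inv, hB0, inv_one]
    split_ifs
    · simp
    · rw [neg_one_mul, norm_neg]
      refine IsUltrametricDist.norm_sum_le_of_forall_le_of_nonneg zero_le_one fun q _ => ?_
      split_ifs with hq
      · rw [norm_mul]
        exact mul_le_one₀ (hB q.1) (norm_nonneg _) (ih q.2 hq)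
      · simp

theorem exists_forall_norm_coeff_le (hθ0 : 0 < θ) (hθ1 : θ < 1)
    (hdisc : ∀ x : K, x ≠ 0 → ∃ n : ℤ, ‖x‖ = θ ^ n)
    {f : K⟦X⟧} {C : ℝ} (hC : ∀ k, ‖coeff k f‖ ≤ C) (hf : f ≠ 0) :
    ∃ n, ∀ k, ‖coeff k f‖ ≤ ‖coeff n f‖ := by
  obtain ⟨k₁, hk₁⟩ := exists_coeff_ne_zero_iff_ne_zero.mpr hf
  obtain ⟨m₁, hm₁⟩ := hdisc _ hk₁
  obtain ⟨N, hN⟩ : ∃ N : ℕ, C < θ⁻¹ ^ N :=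
    pow_unbounded_of_one_lt C ((one_lt_inv₀ hθ0).mpr hθ1)
  let E : Set ℤ := {m | ∃ k, coeff k f ≠ 0 ∧ ‖coeff k f‖ = θ ^ m}
  have hE : ∀ m ∈ E, -(N : ℤ) ≤ m := by
    rintro m ⟨k, -, hk⟩
    have : θ ^ m < θ ^ (-(N : ℤ)) := by
      rw [zpow_neg, zpow_natCast, ← inv_pow, ← hk]
      exact (hC k).trans_lt hN
    exact ((zpow_lt_zpow_iff_right_of_lt_one₀ hθ0 hθ1).mp this).le
  obtain ⟨m₀, ⟨n, -, hn⟩, hm₀⟩ := Int.exists_least_of_bdd ⟨_, hE⟩ ⟨m₁, k₁, hk₁, hm₁⟩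
  refine ⟨n, fun k => ?_⟩
  rcases eq_or_ne (coeff k f) 0 with h | h
  · simp [h]
  · obtain ⟨m, hm⟩ := hdisc _ h
    rw [hm, hn]
    exact zpow_le_zpow_right_of_le_one₀ hθ0 hθ1.le (hm₀ m ⟨k, h, hm⟩)

section WeierstrassDegree

/-- For `f ∈ O_K⟦X⟧` with a unit coefficient, this is the order of `f mod p`. It is `0` when no
coefficient has maximal norm. -/
noncomputable def weierstrassDegree (f : K⟦X⟧) : ℕ :=
  sInf {n | ∀ k, ‖coeff k f‖ ≤ ‖coeff n f‖}

variable {f : K⟦X⟧}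

theorem norm_coeff_le_coeff_weierstrassDegree (hmax : ∃ n, ∀ k, ‖coeff k f‖ ≤ ‖coeff n f‖)
    (k : ℕ) : ‖coeff k f‖ ≤ ‖coeff (weierstrassDegree f) f‖ :=
  Nat.sInf_mem hmax k

theorem norm_coeff_lt_of_lt_weierstrassDegree (hmax : ∃ n, ∀ k, ‖coeff k f‖ ≤ ‖coeff n f‖)
    {k : ℕ} (hk : k < weierstrassDegree f) :
    ‖coeff k f‖ < ‖coeff (weierstrassDegree f) f‖ := by
  refine (norm_coeff_le_coeff_weierstrassDegree hmax k).lt_of_ne fun h => ?_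
  refine hk.not_ge (Nat.sInf_le fun j => ?_)
  rw [h]
  exact norm_coeff_le_coeff_weierstrassDegree hmax j

theorem coeff_weierstrassDegree_ne_zero (hmax : ∃ n, ∀ k, ‖coeff k f‖ ≤ ‖coeff n f‖)
    (hf : f ≠ 0) : coeff (weierstrassDegree f) f ≠ 0 := by
  intro h
  refine hf (ext fun k => ?_)
  simpa [h] using norm_coeff_le_coeff_weierstrassDegree hmax k

theorem exists_mul_eq_X_pow_add_of_coeff_eq_one [IsUltrametricDist K] (hθ0 : 0 ≤ θ)
    {F : K⟦X⟧} {n : ℕ} (hF : ∀ k, ‖coeff k F‖ ≤ 1) (hFn : coeff n F = 1)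
    (hFlt : ∀ k < n, ‖coeff k F‖ ≤ θ) :
    ∃ v A : K⟦X⟧, (∀ k, ‖coeff k v‖ ≤ 1) ∧ (∀ k, ‖coeff k A‖ ≤ θ) ∧ v * F = X ^ n + A := by
  set B : K⟦X⟧ := mk fun i => coeff (i + n) F
  have hB0 : constantCoeff B = 1 := by simpa [B] using hFn
  have hB : ∀ k, ‖coeff k B‖ ≤ 1 := fun k => by simpa [B] using hF (k + n)
  have hBinv := norm_coeff_inv_le_one hB0 hB
  have htrunc : ∀ k, ‖coeff k (trunc n F : K⟦X⟧)‖ ≤ θ := fun k => by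
    rw [Polynomial.coeff_coe, coeff_trunc]
    split_ifs with hk
    exacts [hFlt k hk, by simpa using hθ0]
  refine ⟨B⁻¹, B⁻¹ * trunc n F, hBinv,
    fun k => by simpa using norm_coeff_mul_le zero_le_one hBinv htrunc k, ?_⟩
  conv_lhs => rw [eq_shift_mul_X_pow_add_trunc n F]
  rw [mul_add, ← mul_assoc, PowerSeries.inv_mul_cancel _ (by simp [hB0]), one_mul]

theorem exists_mul_eq_X_pow_weierstrassDegree_add [IsUltrametricDist K] (hθ0 : 0 < θ)
    (hθ1 : θ < 1) (hdisc : ∀ x : K, x ≠ 0 → ∃ n : ℤ, ‖x‖ = θ ^ n)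
    {M : ℝ} (hM : ∀ k, ‖coeff k f‖ ≤ M) (hf : f ≠ 0) :
    ∃ u A : K⟦X⟧, (∃ N, ∀ k, ‖coeff k u‖ ≤ N) ∧ (∀ k, ‖coeff k A‖ ≤ θ) ∧
      u * f = X ^ weierstrassDegree f + A := by
  have hmax := exists_forall_norm_coeff_le hθ0 hθ1 hdisc hM hf
  set n := weierstrassDegree f
  have hn : coeff n f ≠ 0 := coeff_weierstrassDegree_ne_zero hmax hf
  set c := (coeff n f)⁻¹
  have hcoeff : ∀ k, ‖coeff k (C c * f)‖ = ‖coeff k f‖ / ‖coeff n f‖ := fun k => by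
    rw [coeff_C_mul, norm_mul, norm_inv, inv_mul_eq_div]
  have hpos : 0 < ‖coeff n f‖ := norm_pos_iff.mpr hn
  have hF : ∀ k, ‖coeff k (C c * f)‖ ≤ 1 := fun k => by
    rw [hcoeff, div_le_one hpos]
    exact norm_coeff_le_coeff_weierstrassDegree hmax k
  have hFlt : ∀ k < n, ‖coeff k (C c * f)‖ ≤ θ := fun k hk => by
    refine norm_le_of_norm_lt_one hθ0 hθ1 hdisc ?_
    rw [hcoeff, div_lt_one hpos]
    exact norm_coeff_lt_of_lt_weierstrassDegree hmax hk
  obtain ⟨v, A, hv, hA, hvF⟩ := exists_mul_eq_X_pow_add_of_coeff_eq_one hθ0.le hF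
    (by rw [coeff_C_mul, inv_mul_cancel₀ hn]) hFlt
  refine ⟨v * C c, A, ⟨‖c‖, fun k => ?_⟩, hA, by rw [← hvF, mul_assoc]⟩
  rw [mul_comm, coeff_C_mul, norm_mul]
  exact mul_le_of_le_one_right (norm_nonneg c) (hv k)

end WeierstrassDegree

section Division

open WithPiTopology

theorem summable_of_norm_coeff_le_geometric [CompleteSpace K] (hθ0 : 0 ≤ θ) (hθ1 : θ < 1)
    {v : ℕ → K⟦X⟧} {C : ℝ} (hv : ∀ j k, ‖coeff k (v j)‖ ≤ C * θ ^ j) : Summable v :=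
  (summable_iff_summable_coeff K).mpr fun k =>
    .of_norm_bounded ((summable_geometric_of_lt_one hθ0 hθ1).mul_left C) fun j => hv j k

theorem norm_coeff_tsum_le [IsUltrametricDist K] {v : ℕ → K⟦X⟧} (hv : Summable v) {C : ℝ}
    (hC : 0 ≤ C) (h : ∀ j k, ‖coeff k (v j)‖ ≤ C) (k : ℕ) : ‖coeff k (∑' j, v j)‖ ≤ C := by
  rw [((hasSum_iff_hasSum_coeff K).mp hv.hasSum k).tsum_eq.symm]
  exact IsUltrametricDist.norm_tsum_le_of_forall_le_of_nonneg hC fun j => h j k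

theorem exists_eq_mul_X_pow_add_add [IsUltrametricDist K] [CompleteSpace K] (hθ0 : 0 ≤ θ)
    (hθ1 : θ < 1) (n : ℕ) {A : K⟦X⟧} (hA : ∀ k, ‖coeff k A‖ ≤ θ) {g : K⟦X⟧} {C : ℝ}
    (hC : 0 ≤ C) (hg : ∀ k, ‖coeff k g‖ ≤ C) :
    ∃ q r : K⟦X⟧, (∀ k, ‖coeff k q‖ ≤ C) ∧ (∀ k, ‖coeff k r‖ ≤ C) ∧
      (∀ k, n ≤ k → coeff k r = 0) ∧ g = q * (X ^ n + A) + r := by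
  let shift (h : K⟦X⟧) : K⟦X⟧ := mk fun i => coeff (i + n) h
  -- `h = shift h * (X ^ n + A) + trunc n h - shift h * A`, and the last term is `θ` times smaller
  let e (j : ℕ) : K⟦X⟧ := (fun h => -(shift h * A))^[j] g
  have he_succ (j : ℕ) : e (j + 1) = -(shift (e j) * A) := Function.iterate_succ_apply' _ _ _
  have hdec (h : K⟦X⟧) : h = shift h * X ^ n + (trunc n h : K⟦X⟧) :=
    eq_shift_mul_X_pow_add_trunc n h
  have hstep (j : ℕ) :
      e j - e (j + 1) = shift (e j) * (X ^ n + A) + (trunc n (e j) : K⟦X⟧) := by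
    rw [he_succ]
    linear_combination hdec (e j)
  have he (j : ℕ) : ∀ k, ‖coeff k (e j)‖ ≤ C * θ ^ j := by
    induction j with
    | zero => simpa [e] using hg
    | succ j ih =>
      intro k
      rw [he_succ, map_neg, norm_neg, pow_succ, ← mul_assoc]
      exact norm_coeff_mul_le (by positivity) (fun i => by simpa [shift] using ih (i + n)) hA k
  have hq (j k : ℕ) : ‖coeff k (shift (e j))‖ ≤ C * θ ^ j := by simpa [shift] using he j (k + n)
  have hr (j k : ℕ) : ‖coeff k (trunc n (e j) : K⟦X⟧)‖ ≤ C * θ ^ j := by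
    rw [Polynomial.coeff_coe, coeff_trunc]
    split_ifs
    exacts [he j k, by simp only [norm_zero]; positivity]
  have hθC (j : ℕ) : C * θ ^ j ≤ C := mul_le_of_le_one_right hC (pow_le_one₀ hθ0 hθ1.le)
  have hqs := summable_of_norm_coeff_le_geometric hθ0 hθ1 hq
  have hrs := summable_of_norm_coeff_le_geometric hθ0 hθ1 hr
  refine ⟨∑' j, shift (e j), ∑' j, (trunc n (e j) : K⟦X⟧),
    norm_coeff_tsum_le hqs hC fun j k => (hq j k).trans (hθC j),
    norm_coeff_tsum_le hrs hC fun j k => (hr j k).trans (hθC j), fun k hk => ?_, ?_⟩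
  · rw [((hasSum_iff_hasSum_coeff K).mp hrs.hasSum k).tsum_eq.symm]
    simp [Polynomial.coeff_coe, coeff_trunc, hk.not_gt]
  · have hlim := ((hqs.hasSum.mul_right (X ^ n + A)).add hrs.hasSum).tendsto_sum_nat
    simp_rw [← hstep, Finset.sum_range_sub'] at hlim
    have he0 : Tendsto e atTop (nhds 0) := (tendsto_iff_coeff_tendsto K _ _ _).mpr fun k =>
      squeeze_zero_norm (fun m => he m k)
        (by simpa using (tendsto_pow_atTop_nhds_zero_of_lt_one hθ0 hθ1).const_mul C)
    exact tendsto_nhds_unique (by simpa [e] using tendsto_const_nhds.sub he0) hlim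

end Division

/-- With `M = sup_j ‖g_j‖ ρ^j`, comparing the coefficients of `X^(j+n)` in `(X^n + A) * g`
gives `ρ^n M ≤ max C (θ M)`, which forces `ρ^n M ≤ C` as soon as `θ < ρ^n`. -/
theorem norm_coeff_mul_pow_le_of_X_pow_add_mul [IsUltrametricDist K] (hθ0 : 0 ≤ θ) {n : ℕ}
    {A g : K⟦X⟧} (hA : ∀ k, ‖coeff k A‖ ≤ θ) {ρ : ℝ} (hρ0 : 0 ≤ ρ) (hρ1 : ρ ≤ 1) (hρθ : θ < ρ ^ n)
    (hg : BddAbove (Set.range fun j => ‖coeff j g‖ * ρ ^ j)) {C : ℝ} (hC : 0 ≤ C)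
    (hh : ∀ k, ‖coeff k ((X ^ n + A) * g)‖ ≤ C) (j : ℕ) :
    ‖coeff j g‖ * ρ ^ (j + n) ≤ C := by
  set M := ⨆ j, ‖coeff j g‖ * ρ ^ j
  have hgM (b : ℕ) : ‖coeff b g‖ * ρ ^ b ≤ M := le_ciSup hg b
  have hM0 : 0 ≤ M := (by positivity : 0 ≤ ‖coeff 0 g‖ * ρ ^ 0).trans (hgM 0)
  have hAg (N : ℕ) : ‖coeff N (A * g)‖ * ρ ^ N ≤ θ * M := by
    obtain ⟨⟨a, b⟩, hab, hle⟩ := IsUltrametricDist.exists_norm_finsetSum_le_of_nonempty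
      ⟨(0, N), HasAntidiagonal.mem_antidiagonal.mpr (zero_add N)⟩
      fun q : ℕ × ℕ => coeff q.1 A * coeff q.2 g
    rw [HasAntidiagonal.mem_antidiagonal] at hab
    subst hab
    calc ‖coeff (a + b) (A * g)‖ * ρ ^ (a + b)
        ≤ ‖coeff a A‖ * ‖coeff b g‖ * ρ ^ (a + b) := by
          rw [coeff_mul, ← norm_mul]
          gcongr
      _ = ‖coeff a A‖ * (‖coeff b g‖ * ρ ^ b) * ρ ^ a := by ring
      _ ≤ θ * M * 1 := by gcongr; exacts [hA a, hgM b, pow_le_one₀ hρ0 hρ1]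
      _ = θ * M := mul_one _
  have hweighted (j : ℕ) : ‖coeff j g‖ * ρ ^ (j + n) ≤ max C (θ * M) := by
    have hcoeff : coeff j g = coeff (j + n) ((X ^ n + A) * g) - coeff (j + n) (A * g) := by
      simp [add_mul]
    calc ‖coeff j g‖ * ρ ^ (j + n)
        ≤ max ‖coeff (j + n) ((X ^ n + A) * g)‖ ‖coeff (j + n) (A * g)‖ * ρ ^ (j + n) := by
          gcongr
          rw [hcoeff, sub_eq_add_neg, ← norm_neg (coeff (j + n) (A * g))]
          exact IsUltrametricDist.norm_add_le_max _ _
      _ ≤ max C (θ * M) := by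
          rw [max_mul_of_nonneg _ _ (by positivity)]
          exact max_le_max ((mul_le_of_le_one_right (norm_nonneg _) (pow_le_one₀ hρ0 hρ1)).trans
            (hh _)) (hAg _)
  have hM : ρ ^ n * M ≤ max C (θ * M) := by
    calc ρ ^ n * M = ⨆ j, ‖coeff j g‖ * ρ ^ j * ρ ^ n := by
          rw [mul_comm]; exact Real.iSup_mul_of_nonneg (by positivity) _
      _ ≤ max C (θ * M) := ciSup_le fun j => by simpa [mul_assoc, ← pow_add] using hweighted j
  have hMC : ρ ^ n * M ≤ C := by
    rcases le_max_iff.mp hM with h | h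
    · exact h
    · nlinarith
  calc ‖coeff j g‖ * ρ ^ (j + n) = ρ ^ n * (‖coeff j g‖ * ρ ^ j) := by ring
    _ ≤ ρ ^ n * M := by gcongr; exact hgM j
    _ ≤ C := hMC

theorem norm_coeff_le_of_X_pow_add_mul [IsUltrametricDist K] (hθ0 : 0 ≤ θ) (hθ1 : θ < 1)
    {n : ℕ} {A g : K⟦X⟧} (hA : ∀ k, ‖coeff k A‖ ≤ θ) (hg : g ∈ BRig K) {C : ℝ} (hC : 0 ≤ C)
    (hh : ∀ k, ‖coeff k ((X ^ n + A) * g)‖ ≤ C) (j : ℕ) : ‖coeff j g‖ ≤ C := by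
  have hpow (m : ℕ) : Tendsto (fun ρ : ℝ => ρ ^ m) (nhdsWithin 1 (Set.Iio 1)) (nhds 1) := by
    simpa using ((continuous_pow m).tendsto (1 : ℝ)).mono_left nhdsWithin_le_nhds
  have hlim := (hpow (j + n)).const_mul ‖coeff j g‖
  rw [mul_one] at hlim
  refine le_of_tendsto hlim ?_
  filter_upwards [(hpow 1).eventually (lt_mem_nhds one_pos),
    (hpow n).eventually (lt_mem_nhds hθ1), self_mem_nhdsWithin] with ρ hρ0 hρθ hρ1
  rw [pow_one] at hρ0
  exact norm_coeff_mul_pow_le_of_X_pow_add_mul hθ0 hA hρ0.le hρ1.le hρθ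
    (hg ρ hρ0.le hρ1).bddAbove_range hC hh j

end PowerSeries

theorem IsPrincipalIdealRing.of_exists_eq_mul_add {R : Type*} [CommRing R] (d : R → ℕ)
    (h : ∀ f g : R, f ≠ 0 → ∃ q r, g = q * f + r ∧ (r = 0 ∨ d r < d f)) :
    IsPrincipalIdealRing R := by
  classical
  refine ⟨fun I => ?_⟩
  rcases eq_or_ne I ⊥ with rfl | hI
  · exact bot_isPrincipal
  have hex : ∃ n, ∃ f ∈ I, f ≠ 0 ∧ d f = n := by
    obtain ⟨f, hf, hf0⟩ := Submodule.exists_mem_ne_zero_of_ne_bot hI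
    exact ⟨_, f, hf, hf0, rfl⟩
  obtain ⟨f, hfI, hf0, hfd⟩ := Nat.find_spec hex
  refine ⟨f, le_antisymm (fun g hg => ?_) ((Ideal.span_singleton_le_iff_mem I).mpr hfI)⟩
  obtain ⟨q, r, rfl, hr⟩ := h f g hf0
  have hrI : r ∈ I := by simpa using I.sub_mem hg (I.mul_mem_left q hfI)
  obtain rfl | hr0 := eq_or_ne r 0
  · exact Ideal.mem_span_singleton'.mpr ⟨q, by simp⟩
  · exact absurd (hr.resolve_left hr0) (hfd ▸ (Nat.find_min' hex ⟨r, hrI, hr0, rfl⟩).not_gt)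

theorem Module.FaithfullyFlat.of_isPrincipalIdealRing {R A : Type*} [CommRing R] [IsDomain R]
    [IsPrincipalIdealRing R] [CommRing A] [IsDomain A] [Algebra R A]
    [IsLocalHom (algebraMap R A)] (hinj : Function.Injective (algebraMap R A)) :
    Module.FaithfullyFlat R A := by
  have : Module.Flat R A := Module.Flat.flat_iff_torsion_eq_bot_of_isBezout.mpr <|
    Submodule.isTorsionFree_iff_torsion_eq_bot.mp
      (Module.isTorsionFree_iff_algebraMap_injective.mpr hinj)
  refine (Module.FaithfullyFlat.iff_flat_and_ideal_smul_eq_top R A).mpr ⟨this, fun I hI => ?_⟩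
  obtain ⟨r, rfl⟩ := IsPrincipalIdealRing.principal I
  rw [Ideal.smul_top_eq_map, Submodule.restrictScalars_eq_top_iff, Ideal.submodule_span_eq,
    Ideal.map_span, Set.image_singleton, Ideal.span_singleton_eq_top] at hI
  exact Ideal.span_singleton_eq_top.mpr (isUnit_of_map_unit (algebraMap R A) r hI)

section Bplus

variable {K : Type*} [NormedField K] {θ : ℝ}

theorem isPrincipalIdealRing_Bplus [CompleteSpace K] (hna : IsNonarchimedean fun x : K => ‖x‖)
    (hθ0 : 0 < θ) (hθ1 : θ < 1) (hdisc : ∀ x : K, x ≠ 0 → ∃ n : ℤ, ‖x‖ = θ ^ n) :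
    IsPrincipalIdealRing (Bplus K hna) := by
  let := IsUltrametricDist.isUltrametricDist_of_isNonarchimedean_norm hna
  refine .of_exists_eq_mul_add (fun f => weierstrassDegree (f : K⟦X⟧)) fun f g hf => ?_
  obtain ⟨Mf, hMf⟩ := f.2
  obtain ⟨Mg, hMg⟩ := g.2
  obtain ⟨u, A, ⟨Mu, hMu⟩, hA, hu⟩ :=
    exists_mul_eq_X_pow_weierstrassDegree_add hθ0 hθ1 hdisc hMf (by exact_mod_cast hf)
  obtain ⟨q, r, hq, hr, hr0, hgqr⟩ := exists_eq_mul_X_pow_add_add hθ0.le hθ1 _ hA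
    (le_max_right Mg 0) fun k => (hMg k).trans (le_max_left _ _)
  rw [← hu] at hgqr
  refine ⟨⟨q * u, mul_mem ⟨_, hq⟩ ⟨_, hMu⟩⟩, ⟨r, _, hr⟩,
    Subtype.ext (by simp [hgqr, mul_assoc]), or_iff_not_imp_left.mpr fun hr' => ?_⟩
  have hr' : r ≠ 0 := fun h => hr' (Subtype.ext h)
  have hmax := exists_forall_norm_coeff_le hθ0 hθ1 hdisc hr hr'
  exact lt_of_not_ge fun h => coeff_weierstrassDegree_ne_zero hmax hr' (hr0 _ h)

theorem isLocalHom_inclusion_Bplus_le_BRig (hna : IsNonarchimedean fun x : K => ‖x‖)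
    (hθ0 : 0 < θ) (hθ1 : θ < 1) (hdisc : ∀ x : K, x ≠ 0 → ∃ n : ℤ, ‖x‖ = θ ^ n) :
    IsLocalHom (Subring.inclusion (Bplus_le_BRig K hna)) := by
  let := IsUltrametricDist.isUltrametricDist_of_isNonarchimedean_norm hna
  refine ⟨fun f ⟨v, hv⟩ => ?_⟩
  have hfg : (f : K⟦X⟧) * (↑v⁻¹ : BRig K) = 1 := by
    have := congrArg Subtype.val v.mul_inv
    rwa [hv] at this
  have hf : (f : K⟦X⟧) ≠ 0 := by
    rintro h
    simp [h] at hfg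
  obtain ⟨M, hM⟩ := f.2
  obtain ⟨u, A, ⟨N, hN⟩, hA, hu⟩ := exists_mul_eq_X_pow_weierstrassDegree_add hθ0 hθ1 hdisc hM hf
  have hg := norm_coeff_le_of_X_pow_add_mul hθ0.le hθ1 hA (↑v⁻¹ : BRig K).2 (le_max_right N 0)
    fun k => by
      rw [← hu, mul_assoc, hfg, mul_one]
      exact (hN k).trans (le_max_left _ _)
  exact IsUnit.of_mul_eq_one (⟨_, _, hg⟩ : Bplus K hna) (Subtype.ext hfg)

end Bplus

theorem statement2
    (p : ℕ) (hp : p.Prime)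
    (K : Type*) [NormedField K] [CompleteSpace K] [CharZero K]
    -- the absolute value is nonarchimedean ...
    (hna : IsNonarchimedean (fun x : K => ‖x‖))
    -- ... and induced by a discrete valuation in which `p` is a uniformizer
    (hp1 : ‖(p : K)‖ < 1)
    (hdisc : ∀ x : K, x ≠ 0 → ∃ n : ℤ, ‖x‖ = ‖(p : K)‖ ^ n) :
    Bplus K hna ≤ BRig K ∧
      (letI : Algebra (Bplus K hna) (BRig K) :=
        (Subring.inclusion (Bplus_le_BRig K hna)).toAlgebra
      Module.FaithfullyFlat (Bplus K hna) (BRig K)) := by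
  have hp0 : 0 < ‖(p : K)‖ := norm_pos_iff.mpr (Nat.cast_ne_zero.mpr hp.ne_zero)
  refine ⟨Bplus_le_BRig K hna, ?_⟩
  let : Algebra (Bplus K hna) (BRig K) := (Subring.inclusion (Bplus_le_BRig K hna)).toAlgebra
  have := isPrincipalIdealRing_Bplus hna hp0 hp1 hdisc
  have := isLocalHom_inclusion_Bplus_le_BRig hna hp0 hp1 hdisc
  exact .of_isPrincipalIdealRing (Subring.inclusion_injective _)
end
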